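/- Let E be a regular sublinear expectation on the space X of bounded measurable real-valued functions on (Ω, F) satisfying assumption (H₀), with upper capacity C(A) := E(1_A), and let {ξ_n}_{n≥1} ⊂ X be an independent sequence with respect to E. Then the partial sums S_n := Σ_{i=1}^{n} ξ_i converge pointwise outside a C-polar set to some finite-valued random variable (C-quasi-surely) if and only if {S_n} converges in capacity. -/

import Mathlib

/-!
Quasi-sure convergence implies convergence in capacity to the pointwise limit, because regularity
makes the capacity continuous along decreasing sequences of sets with empty intersection.

For the converse, every linear expectation `L` dominated by a regular `𝔼` is integration against
a probability measure `μ_L ≤ C`, and by Hahn–Banach `C(A) = max_L μ_L(A)`; so it suffices to show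
that the set where `(S_n)` is not Cauchy is `μ_L`-null for every `L`. This follows from Ottaviani's
maximal inequality under `μ_L`: decompose `{sup_{m>N} |S_m - S_N| > 2ε}` by the first exceedance
time `m`; independence bounds the part where also `|S_M - S_m| > ε` by `δ` times the capacity of
the first-exceedance event, and the rest lies in `{|S_M - S_N| > ε}`. The capacities of the
disjoint first-exceedance events add up to at most a constant `K` independent of `N`: by (H₀),
since otherwise one could peel off infinitely many disjoint finite families of total capacity
`≥ 1` each.
-/

open MeasureTheory Set Filter Topology Classical

/-- The space of bounded measurable real-valued functions on `Ω`, as a submodule of `Ω → ℝ`. -/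
def BM (Ω : Type*) [MeasurableSpace Ω] : Submodule ℝ (Ω → ℝ) where
  carrier := {f | Measurable f ∧ ∃ M : ℝ, ∀ ω, |f ω| ≤ M}
  zero_mem' := ⟨measurable_const, 0, by simp⟩
  add_mem' := by
    rintro f g ⟨hf, Mf, hMf⟩ ⟨hg, Mg, hMg⟩
    exact ⟨hf.add hg, Mf + Mg, fun ω => (abs_add_le _ _).trans (add_le_add (hMf ω) (hMg ω))⟩
  smul_mem' := by
    rintro c f ⟨hf, Mf, hMf⟩
    refine ⟨hf.const_smul c, |c| * Mf, fun ω => ?_⟩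
    simp only [Pi.smul_apply, smul_eq_mul, abs_mul]
    exact mul_le_mul_of_nonneg_left (hMf ω) (abs_nonneg c)

variable {Ω : Type*} [MeasurableSpace Ω]

lemma mem_BM {f : Ω → ℝ} (hf : Measurable f) (M : ℝ) (hM : ∀ ω, |f ω| ≤ M) : f ∈ BM Ω :=
  ⟨hf, M, hM⟩

lemma BM.measurable (ξ : BM Ω) : Measurable (ξ : Ω → ℝ) := ξ.2.1

lemma BM.bounded (ξ : BM Ω) : ∃ M : ℝ, ∀ ω, |(ξ : Ω → ℝ) ω| ≤ M := ξ.2.2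

/-- A sublinear expectation on the space of bounded measurable functions. -/
structure SLE (Ω : Type*) [MeasurableSpace Ω] where
  E : BM Ω → ℝ
  mono : ∀ ξ η : BM Ω, (∀ ω, (η : Ω → ℝ) ω ≤ (ξ : Ω → ℝ) ω) → E η ≤ E ξ
  const_preserve : ∀ (c : ℝ) (h : (fun _ : Ω => c) ∈ BM Ω), E ⟨fun _ => c, h⟩ = c
  subadd : ∀ ξ η : BM Ω, E (ξ + η) ≤ E ξ + E η
  pos_homog : ∀ (c : ℝ), 0 ≤ c → ∀ ξ : BM Ω, E (c • ξ) = c * E ξ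

/-- The constant function as an element of `BM Ω`. -/
def constBM (Ω : Type*) [MeasurableSpace Ω] (c : ℝ) : BM Ω :=
  ⟨fun _ => c, mem_BM measurable_const |c| fun _ => le_refl _⟩

/-- The indicator function of a measurable set as an element of `BM Ω`. -/
noncomputable def indBM {Ω : Type*} [MeasurableSpace Ω] (A : Set Ω) (hA : MeasurableSet A) : BM Ω :=
  ⟨A.indicator fun _ => 1,
    mem_BM (measurable_const.indicator hA) 1 fun ω => by
      by_cases h : ω ∈ A <;> simp [Set.indicator_apply, h]⟩

/-- The product of two bounded measurable functions. -/
noncomputable def mulBM (ξ η : BM Ω) : BM Ω := by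
  refine ⟨fun ω => (ξ : Ω → ℝ) ω * (η : Ω → ℝ) ω, ?_⟩
  obtain ⟨Mf, hMf⟩ := BM.bounded ξ
  obtain ⟨Mg, hMg⟩ := BM.bounded η
  refine mem_BM ((BM.measurable ξ).mul (BM.measurable η)) (max Mf 0 * max Mg 0) fun ω => ?_
  rw [abs_mul]
  exact mul_le_mul ((hMf ω).trans (le_max_left _ _)) ((hMg ω).trans (le_max_left _ _))
    (abs_nonneg _) (le_max_right _ _)

/-- The upper capacity associated to a sublinear expectation: `C(A) = E(1_A)` for measurable `A`
(junk value `0` on non-measurable sets). -/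
noncomputable def SLE.cap (𝔼 : SLE Ω) (A : Set Ω) : ℝ :=
  if h : MeasurableSet A then 𝔼.E (indBM A h) else 0

/-- The lower capacity associated to a sublinear expectation: `c(A) = -E(-1_A)` for measurable `A`
(junk value `0` on non-measurable sets). -/
noncomputable def SLE.lcap (𝔼 : SLE Ω) (A : Set Ω) : ℝ :=
  if h : MeasurableSet A then -𝔼.E (-(indBM A h)) else 0

/-- A linear expectation dominated by the sublinear expectation `𝔼`. -/
def Dominated (𝔼 : SLE Ω) (L : BM Ω →ₗ[ℝ] ℝ) : Prop := ∀ ξ : BM Ω, L ξ ≤ 𝔼.E ξ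

/-- `ξ` and `η` are uncorrelated with respect to `𝔼` if `L(ξη) = L(ξ)L(η)` for every
linear expectation `L` dominated by `𝔼`. -/
def Uncorrelated (𝔼 : SLE Ω) (ξ η : BM Ω) : Prop :=
  ∀ L : BM Ω →ₗ[ℝ] ℝ, Dominated 𝔼 L → L (mulBM ξ η) = L ξ * L η

/-- `𝔼` is regular: if `ξ n ↓ 0` pointwise then `𝔼.E (ξ n) ↓ 0`. -/
def SLE.Regular (𝔼 : SLE Ω) : Prop :=
  ∀ ξ : ℕ → BM Ω, (∀ ω, Antitone fun n => (ξ n : Ω → ℝ) ω) →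
    (∀ ω, Tendsto (fun n => (ξ n : Ω → ℝ) ω) atTop (𝓝 0)) →
    Tendsto (fun n => 𝔼.E (ξ n)) atTop (𝓝 0)

/-- The σ-field generated by `ξ a, …, ξ b`. -/
def sigmaGen (ξ : ℕ → BM Ω) (a b : ℕ) : MeasurableSpace Ω :=
  ⨆ i ∈ Set.Icc a b, MeasurableSpace.comap (fun ω => (ξ i : Ω → ℝ) ω) inferInstance

/-- `{ξ_n}_{n ≥ 1}` is an independent sequence under `𝔼`: pairwise uncorrelated, and
`C(A ∩ B) ≤ C(A) C(B)` whenever `A ∈ σ(ξ_1, …, ξ_m)` and `B ∈ σ(ξ_{m+1}, …, ξ_n)`, `m < n`. -/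
def IndepSeq (𝔼 : SLE Ω) (ξ : ℕ → BM Ω) : Prop :=
  (∀ i j, 1 ≤ i → 1 ≤ j → i ≠ j → Uncorrelated 𝔼 (ξ i) (ξ j)) ∧
  ∀ m n : ℕ, 1 ≤ m → m < n → ∀ A B : Set Ω,
    MeasurableSet[sigmaGen ξ 1 m] A → MeasurableSet[sigmaGen ξ (m + 1) n] B →
    𝔼.cap (A ∩ B) ≤ 𝔼.cap A * 𝔼.cap B

/-- Assumption (H₀): for every disjoint measurable cover `{A_n}` of `Ω`,
the series `Σ C(A_n)` has bounded partial sums. -/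
def H0 (𝔼 : SLE Ω) : Prop :=
  ∀ A : ℕ → Set Ω, (∀ n, MeasurableSet (A n)) → Pairwise (Function.onFun Disjoint A) →
    (⋃ n, A n) = Set.univ → ∃ M : ℝ, ∀ N : ℕ, ∑ n ∈ Finset.range N, 𝔼.cap (A n) < M

lemma indBM_empty : indBM (∅ : Set Ω) MeasurableSet.empty = 0 := by
  ext; simp [indBM]

lemma indBM_univ : indBM (Set.univ : Set Ω) MeasurableSet.univ = constBM Ω 1 := by
  ext; simp [indBM, constBM]

lemma indBM_nonneg {A : Set Ω} (hA : MeasurableSet A) (ω : Ω) : 0 ≤ (indBM A hA : Ω → ℝ) ω :=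
  Set.indicator_nonneg (fun _ _ => zero_le_one) ω

lemma indBM_diff {A B : Set Ω} (hA : MeasurableSet A) (hB : MeasurableSet B) (h : B ⊆ A) :
    indBM (A \ B) (hA.diff hB) = indBM A hA - indBM B hB := by
  ext ω; simp [indBM, Set.indicator_sdiff h]

lemma indBM_biUnion {ι : Type*} {s : Finset ι} {A : ι → Set Ω} (hA : ∀ i, MeasurableSet (A i))
    (hd : (s : Set ι).PairwiseDisjoint A) :
    indBM (⋃ i ∈ s, A i) (s.measurableSet_biUnion fun i _ => hA i) =
      ∑ i ∈ s, indBM (A i) (hA i) := by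
  ext ω
  simp only [AddSubmonoidClass.coe_finsetSum, Finset.sum_apply]
  exact Finset.indicator_biUnion_apply s A (f := fun _ => (1 : ℝ)) hd ω

namespace SLE

variable (𝔼 : SLE Ω)

lemma E_zero : 𝔼.E 0 = 0 := by
  simpa using 𝔼.pos_homog 0 le_rfl 0

lemma E_mono {ξ η : BM Ω} (h : ∀ ω, (ξ : Ω → ℝ) ω ≤ (η : Ω → ℝ) ω) : 𝔼.E ξ ≤ 𝔼.E η :=
  𝔼.mono η ξ h

lemma E_constBM (c : ℝ) : 𝔼.E (constBM Ω c) = c := 𝔼.const_preserve c _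

lemma mul_E_le_E_smul (c : ℝ) (ξ : BM Ω) : c * 𝔼.E ξ ≤ 𝔼.E (c • ξ) := by
  rcases le_or_gt 0 c with hc | hc
  · exact (𝔼.pos_homog c hc ξ).ge
  · have h := 𝔼.subadd (c • ξ) ((-c) • ξ)
    rw [← add_smul, add_neg_cancel, zero_smul, E_zero, 𝔼.pos_homog (-c) (by linarith)] at h
    linarith

lemma cap_eq_E {A : Set Ω} (hA : MeasurableSet A) : 𝔼.cap A = 𝔼.E (indBM A hA) := dif_pos hA

lemma cap_nonneg (A : Set Ω) : 0 ≤ 𝔼.cap A := by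
  unfold SLE.cap
  split_ifs with hA
  · simpa [E_zero] using 𝔼.E_mono (ξ := 0) (η := indBM A hA) (indBM_nonneg hA)
  · rfl

lemma cap_le_one (A : Set Ω) : 𝔼.cap A ≤ 1 := by
  unfold SLE.cap
  split_ifs with hA
  · simpa [E_constBM] using 𝔼.E_mono (η := constBM Ω 1) (ξ := indBM A hA) fun ω => by
      simp [indBM, constBM, Set.indicator_apply_le']
  · exact zero_le_one

lemma cap_empty : 𝔼.cap ∅ = 0 := by
  rw [𝔼.cap_eq_E MeasurableSet.empty, indBM_empty, E_zero]

lemma cap_mono {A B : Set Ω} (hB : MeasurableSet B) (h : A ⊆ B) : 𝔼.cap A ≤ 𝔼.cap B := by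
  by_cases hA : MeasurableSet A
  · rw [𝔼.cap_eq_E hA, 𝔼.cap_eq_E hB]
    exact 𝔼.E_mono fun ω => Set.indicator_le_indicator_of_subset h (fun _ => zero_le_one) ω
  · rw [SLE.cap, dif_neg hA]
    exact 𝔼.cap_nonneg B

lemma cap_union_le {A B : Set Ω} (hA : MeasurableSet A) (hB : MeasurableSet B) :
    𝔼.cap (A ∪ B) ≤ 𝔼.cap A + 𝔼.cap B := by
  rw [𝔼.cap_eq_E hA, 𝔼.cap_eq_E hB, 𝔼.cap_eq_E (hA.union hB)]
  refine (𝔼.E_mono fun ω => ?_).trans (𝔼.subadd _ _)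
  change (A ∪ B).indicator (fun _ => (1 : ℝ)) ω ≤
    A.indicator (fun _ => 1) ω + B.indicator (fun _ => 1) ω
  by_cases hωA : ω ∈ A <;> by_cases hωB : ω ∈ B <;> simp [hωA, hωB]

lemma Regular.tendsto_cap_zero {𝔼 : SLE Ω} (hreg : 𝔼.Regular) {A : ℕ → Set Ω}
    (hA : ∀ n, MeasurableSet (A n)) (hanti : Antitone A) (hempty : ⋂ n, A n = ∅) :
    Tendsto (fun n => 𝔼.cap (A n)) atTop (𝓝 0) := by
  simp only [𝔼.cap_eq_E (hA _)]
  refine hreg _ (fun ω m n hmn => Set.indicator_le_indicator_of_subset (hanti hmn)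
    (fun _ => zero_le_one) ω) fun ω => ?_
  obtain ⟨n₀, hn₀⟩ : ∃ n, ω ∉ A n := by
    simpa using (hempty ▸ Set.notMem_empty ω : ω ∉ ⋂ n, A n)
  exact tendsto_atTop_of_eventually_const (i₀ := n₀) fun n hn =>
    Set.indicator_of_notMem (fun h => hn₀ (hanti hn h)) (fun _ => (1 : ℝ))

end SLE

lemma SLE.exists_dominated_eq (𝔼 : SLE Ω) (ξ : BM Ω) :
    ∃ L : BM Ω →ₗ[ℝ] ℝ, Dominated 𝔼 L ∧ L ξ = 𝔼.E ξ := by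
  let p := LinearPMap.mkSpanSingleton' (σ := RingHom.id ℝ) ξ (𝔼.E ξ) fun c hc => by
    rcases smul_eq_zero.1 hc with rfl | rfl <;> simp [SLE.E_zero]
  have hp : ∀ y : p.domain, p y ≤ 𝔼.E y := by
    rintro ⟨y, hy⟩
    obtain ⟨c, rfl⟩ := Submodule.mem_span_singleton.1 hy
    simpa only [p, LinearPMap.mkSpanSingleton'_apply, RingHom.id_apply, smul_eq_mul]
      using 𝔼.mul_E_le_E_smul c ξ
  obtain ⟨g, hgp, hgE⟩ :=
    exists_extension_of_le_sublinear p 𝔼.E (fun c hc => 𝔼.pos_homog c hc.le) 𝔼.subadd hp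
  exact ⟨g, hgE, (hgp ⟨ξ, Submodule.mem_span_singleton_self ξ⟩).trans
    (LinearPMap.mkSpanSingleton'_apply_self _ _ _ _)⟩

namespace Dominated

variable {𝔼 : SLE Ω} {L : BM Ω →ₗ[ℝ] ℝ}

lemma map_nonneg (hL : Dominated 𝔼 L) {ξ : BM Ω} (h : ∀ ω, 0 ≤ (ξ : Ω → ℝ) ω) : 0 ≤ L ξ := by
  have h₁ := hL (-ξ)
  have h₂ : 𝔼.E (-ξ) ≤ 𝔼.E 0 := 𝔼.E_mono fun ω => by simpa using h ω
  rw [map_neg, SLE.E_zero] at *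
  linarith

lemma map_constBM (hL : Dominated 𝔼 L) (c : ℝ) : L (constBM Ω c) = c := by
  have h₁ := hL (constBM Ω c)
  have h₂ := hL (-constBM Ω c)
  rw [map_neg, ← show constBM Ω (-c) = -constBM Ω c from rfl, SLE.E_constBM] at h₂
  rw [SLE.E_constBM] at h₁
  linarith

lemma map_indBM_le_cap (hL : Dominated 𝔼 L) {A : Set Ω} (hA : MeasurableSet A) :
    L (indBM A hA) ≤ 𝔼.cap A :=
  (𝔼.cap_eq_E hA).symm ▸ hL _

lemma hasSum_map_indBM (hL : Dominated 𝔼 L) (hreg : 𝔼.Regular) {A : ℕ → Set Ω}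
    (hA : ∀ n, MeasurableSet (A n)) (hd : Pairwise (Function.onFun Disjoint A)) :
    HasSum (fun n => L (indBM (A n) (hA n))) (L (indBM (⋃ n, A n) (.iUnion hA))) := by
  set U := ⋃ n, A n
  set P : ℕ → Set Ω := fun n => ⋃ i ∈ Finset.range n, A i
  have hP : ∀ n, MeasurableSet (P n) := fun n =>
    (Finset.range n).measurableSet_biUnion fun i _ => hA i
  have hPU : ∀ n, P n ⊆ U := fun n => Set.iUnion₂_subset fun i _ => Set.subset_iUnion A i
  have hsum : ∀ n, ∑ i ∈ Finset.range n, L (indBM (A i) (hA i)) =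
      L (indBM U (.iUnion hA)) - L (indBM (U \ P n) ((MeasurableSet.iUnion hA).diff (hP n))) := by
    intro n
    rw [← map_sum, ← indBM_biUnion hA (hd.set_pairwise _), indBM_diff (.iUnion hA) (hP n) (hPU n),
      map_sub]
    ring
  have hrest : Tendsto (fun n => L (indBM (U \ P n) ((MeasurableSet.iUnion hA).diff (hP n))))
      atTop (𝓝 0) := by
    refine squeeze_zero (fun n => hL.map_nonneg (indBM_nonneg _)) (fun n => hL.map_indBM_le_cap _)
      (hreg.tendsto_cap_zero (fun n => (MeasurableSet.iUnion hA).diff (hP n)) ?_ ?_)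
    · exact fun m n hmn => Set.sdiff_subset_sdiff_right
        (Set.biUnion_subset_biUnion_left (by simpa using hmn))
    · refine Set.eq_empty_of_forall_notMem fun ω hω => ?_
      simp only [Set.mem_iInter, Set.mem_sdiff] at hω
      obtain ⟨i, hi⟩ := Set.mem_iUnion.1 (hω 0).1
      exact (hω (i + 1)).2 (Set.mem_biUnion (Finset.self_mem_range_succ i) hi)
  rw [hasSum_iff_tendsto_nat_of_nonneg fun n => hL.map_nonneg (indBM_nonneg _)]
  simpa [hsum] using hrest.const_sub (L (indBM U (.iUnion hA)))

/-- The measure `A ↦ L(1_A)`: regularity of `𝔼` is what makes it countably additive. -/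
noncomputable def toMeasure (hL : Dominated 𝔼 L) (hreg : 𝔼.Regular) : Measure Ω :=
  Measure.ofMeasurable (fun A hA => ENNReal.ofReal (L (indBM A hA)))
    (by rw [indBM_empty, map_zero, ENNReal.ofReal_zero])
    fun A hA hd => by
      rw [← (hL.hasSum_map_indBM hreg hA hd).tsum_eq, ENNReal.ofReal_tsum_of_nonneg
        (fun n => hL.map_nonneg (indBM_nonneg _)) (hL.hasSum_map_indBM hreg hA hd).summable]

lemma toMeasure_apply (hL : Dominated 𝔼 L) (hreg : 𝔼.Regular) {A : Set Ω}
    (hA : MeasurableSet A) : hL.toMeasure hreg A = ENNReal.ofReal (L (indBM A hA)) := by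
  unfold toMeasure; exact Measure.ofMeasurable_apply A hA

lemma isProbabilityMeasure_toMeasure (hL : Dominated 𝔼 L) (hreg : 𝔼.Regular) :
    IsProbabilityMeasure (hL.toMeasure hreg) :=
  ⟨by rw [hL.toMeasure_apply hreg .univ, indBM_univ, hL.map_constBM, ENNReal.ofReal_one]⟩

lemma measureReal_toMeasure_le_cap (hL : Dominated 𝔼 L) (hreg : 𝔼.Regular) {A : Set Ω}
    (hA : MeasurableSet A) : (hL.toMeasure hreg).real A ≤ 𝔼.cap A := by
  rw [measureReal_def, hL.toMeasure_apply hreg hA,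
    ENNReal.toReal_ofReal (hL.map_nonneg (indBM_nonneg _))]
  exact hL.map_indBM_le_cap hA

end Dominated

lemma SLE.cap_eq_zero_of_forall_toMeasure {𝔼 : SLE Ω} (hreg : 𝔼.Regular) {A : Set Ω}
    (hA : MeasurableSet A) (h : ∀ L (hL : Dominated 𝔼 L), hL.toMeasure hreg A = 0) :
    𝔼.cap A = 0 := by
  obtain ⟨L, hL, hLA⟩ := 𝔼.exists_dominated_eq (indBM A hA)
  have hA0 := h L hL
  rw [hL.toMeasure_apply hreg hA, ENNReal.ofReal_eq_zero, hLA, ← 𝔼.cap_eq_E hA] at hA0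
  exact le_antisymm hA0 (𝔼.cap_nonneg A)

lemma H0.summable_cap {𝔼 : SLE Ω} (hH0 : H0 𝔼) {A : ℕ → Set Ω} (hA : ∀ n, MeasurableSet (A n))
    (hd : Pairwise (Function.onFun Disjoint A)) : Summable fun n => 𝔼.cap (A n) := by
  let B : ℕ → Set Ω := fun n => Nat.casesOn n (⋃ n, A n)ᶜ A
  have hB : ∀ n, MeasurableSet (B n) := by
    rintro (_ | n)
    exacts [(MeasurableSet.iUnion hA).compl, hA n]
  have hBd : Pairwise (Function.onFun Disjoint B) := by
    rintro (_ | m) (_ | n) hmn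
    · exact absurd rfl hmn
    · exact disjoint_compl_left.mono_right (Set.subset_iUnion A n)
    · exact (disjoint_compl_left.mono_right (Set.subset_iUnion A m)).symm
    · exact hd fun h => hmn (congrArg _ h)
  have hBcov : ⋃ n, B n = Set.univ := by
    refine Set.eq_univ_of_forall fun ω => ?_
    by_cases h : ω ∈ ⋃ n, A n
    · obtain ⟨n, hn⟩ := Set.mem_iUnion.1 h
      exact Set.mem_iUnion.2 ⟨n + 1, hn⟩
    · exact Set.mem_iUnion.2 ⟨0, h⟩
  obtain ⟨M, hM⟩ := hH0 B hB hBd hBcov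
  exact (summable_nat_add_iff 1).2
    (summable_of_sum_range_le (fun n => 𝔼.cap_nonneg _) fun n => (hM n).le)

def DisjointFamilyIn (R : Set Ω) (s : Finset ℕ) (A : ℕ → Set Ω) : Prop :=
  (∀ i ∈ s, MeasurableSet (A i) ∧ A i ⊆ R) ∧ (s : Set ℕ).PairwiseDisjoint A

def SLE.CapUnbounded (𝔼 : SLE Ω) (R : Set Ω) : Prop :=
  ∀ t : ℝ, ∃ s A, DisjointFamilyIn R s A ∧ t ≤ ∑ i ∈ s, 𝔼.cap (A i)

namespace SLE.CapUnbounded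

variable {𝔼 : SLE Ω} {R : Set Ω}

lemma not_empty : ¬ 𝔼.CapUnbounded ∅ := by
  intro hU
  obtain ⟨s, A, ⟨hA, -⟩, hsum⟩ := hU 1
  rw [Finset.sum_eq_zero fun i hi => by rw [Set.subset_empty_iff.1 (hA i hi).2, 𝔼.cap_empty]]
    at hsum
  linarith

lemma of_subset_union (hU : 𝔼.CapUnbounded R) {R₁ R₂ : Set Ω} (h₁ : MeasurableSet R₁)
    (h₂ : MeasurableSet R₂) (h : R ⊆ R₁ ∪ R₂) : 𝔼.CapUnbounded R₁ ∨ 𝔼.CapUnbounded R₂ := by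
  by_contra! hb
  simp only [SLE.CapUnbounded, not_forall, not_exists, not_and, not_le] at hb
  obtain ⟨⟨t₁, ht₁⟩, ⟨t₂, ht₂⟩⟩ := hb
  obtain ⟨s, A, ⟨hA, hd⟩, hsum⟩ := hU (t₁ + t₂)
  have trace : ∀ {R'}, MeasurableSet R' → DisjointFamilyIn R' s fun i => A i ∩ R' := fun hR' =>
    ⟨fun i hi => ⟨(hA i hi).1.inter hR', Set.inter_subset_right⟩,
      hd.mono fun i => Set.inter_subset_left⟩
  have hsplit : ∀ i ∈ s, 𝔼.cap (A i) ≤ 𝔼.cap (A i ∩ R₁) + 𝔼.cap (A i ∩ R₂) := fun i hi => by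
    refine (𝔼.cap_mono (((hA i hi).1.inter h₁).union ((hA i hi).1.inter h₂)) ?_).trans
      (𝔼.cap_union_le ((hA i hi).1.inter h₁) ((hA i hi).1.inter h₂))
    rw [← Set.inter_union_distrib_left]
    exact Set.subset_inter subset_rfl ((hA i hi).2.trans h)
  have := Finset.sum_le_sum hsplit
  rw [Finset.sum_add_distrib] at this
  linarith [ht₁ s _ (trace h₁), ht₂ s _ (trace h₂)]

lemma exists_of_subset_biUnion {s : Finset ℕ} {A : ℕ → Set Ω}
    (hA : ∀ i ∈ s, MeasurableSet (A i)) (hU : 𝔼.CapUnbounded R) (hR : R ⊆ ⋃ i ∈ s, A i) :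
    ∃ i ∈ s, 𝔼.CapUnbounded (A i) := by
  induction s using Finset.induction_on generalizing R with
  | empty => exact (not_empty (Set.subset_empty_iff.1 (by simpa using hR) ▸ hU)).elim
  | insert a s _ ih =>
    rw [Finset.set_biUnion_insert] at hR
    rcases hU.of_subset_union (hA a (Finset.mem_insert_self a s))
      (s.measurableSet_biUnion fun i hi => hA i (Finset.mem_insert_of_mem hi)) hR with h | h
    · exact ⟨a, Finset.mem_insert_self a s, h⟩
    · obtain ⟨i, hi, h'⟩ := ih (fun i hi => hA i (Finset.mem_insert_of_mem hi)) h subset_rfl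
      exact ⟨i, Finset.mem_insert_of_mem hi, h'⟩

/-- Take a family of total capacity `≥ 2`: either the rest of `R` stays unbounded, or some member
does, and the other members still have total capacity `≥ 1` because `C ≤ 1`. -/
lemma exists_split (hU : 𝔼.CapUnbounded R) (hR : MeasurableSet R) :
    ∃ s A R', DisjointFamilyIn (R \ R') s A ∧ 1 ≤ ∑ i ∈ s, 𝔼.cap (A i) ∧
      MeasurableSet R' ∧ R' ⊆ R ∧ 𝔼.CapUnbounded R' := by
  obtain ⟨s, A, ⟨hA, hd⟩, hsum⟩ := hU 2
  set U := ⋃ i ∈ s, A i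
  have hUm : MeasurableSet U := s.measurableSet_biUnion fun i hi => (hA i hi).1
  rcases hU.of_subset_union hUm (hR.diff hUm) fun ω hω => (Classical.em (ω ∈ U)).imp id (⟨hω, ·⟩)
    with hUU | hRU
  · obtain ⟨i₀, hi₀, hUi₀⟩ := hUU.exists_of_subset_biUnion (fun i hi => (hA i hi).1) subset_rfl
    refine ⟨s.erase i₀, A, A i₀, ⟨fun i hi => ?_, hd.subset (by simp)⟩, ?_, (hA i₀ hi₀).1,
      (hA i₀ hi₀).2, hUi₀⟩
    · obtain ⟨hne, hi⟩ := Finset.mem_erase.1 hi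
      exact ⟨(hA i hi).1, Set.subset_sdiff.2 ⟨(hA i hi).2, hd hi hi₀ hne⟩⟩
    · linarith [Finset.sum_erase_add s (fun i => 𝔼.cap (A i)) hi₀, 𝔼.cap_le_one (A i₀)]
  · refine ⟨s, A, R \ U, ⟨fun i hi => ⟨(hA i hi).1, fun ω hω => ⟨(hA i hi).2 hω,
      fun h => h.2 (Set.mem_biUnion hi hω)⟩⟩, hd⟩, by linarith, hR.diff hUm, Set.sdiff_subset, hRU⟩

lemma exists_disjoint_family (hU : 𝔼.CapUnbounded Set.univ) :
    ∃ F : ℕ × ℕ → Set Ω, (∀ p, MeasurableSet (F p)) ∧ Pairwise (Function.onFun Disjoint F) ∧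
      ∀ k, ∃ s : Finset ℕ, 1 ≤ ∑ i ∈ s, 𝔼.cap (F (k, i)) := by
  -- iterate `exists_split` from `univ`; the `k`-th family lies in `R k \ R (k + 1)`
  choose! s A next hfam hsum hnext hsub hUnext using
    fun (R : Set Ω) (h : MeasurableSet R ∧ 𝔼.CapUnbounded R) => h.2.exists_split h.1
  let R : ℕ → Set Ω := fun k => next^[k] Set.univ
  have hRsucc : ∀ k, R (k + 1) = next (R k) := fun k => Function.iterate_succ_apply' _ _ _
  have hR : ∀ k, MeasurableSet (R k) ∧ 𝔼.CapUnbounded (R k) := by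
    intro k
    induction k with
    | zero => exact ⟨.univ, hU⟩
    | succ k ih => exact hRsucc k ▸ ⟨hnext _ ih, hUnext _ ih⟩
  have hRanti : Antitone R := antitone_nat_of_succ_le fun k => hRsucc k ▸ hsub _ (hR k)
  let F : ℕ × ℕ → Set Ω := fun p => if p.2 ∈ s (R p.1) then A (R p.1) p.2 else ∅
  have hF : ∀ k i, F (k, i) ⊆ R k \ R (k + 1) := by
    intro k i
    by_cases hi : i ∈ s (R k)
    · simpa [F, hi, hRsucc] using ((hfam _ (hR k)).1 i hi).2
    · simp [F, hi]
  have hFlt : ∀ k i l j, k < l → Disjoint (F (k, i)) (F (l, j)) := fun k i l j hkl =>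
    Set.disjoint_of_subset (hF k i) ((hF l j).trans (Set.sdiff_subset.trans (hRanti hkl)))
      Set.disjoint_sdiff_left
  refine ⟨F, fun p => ?_, ?_, fun k => ⟨s (R k), ?_⟩⟩
  · by_cases h : p.2 ∈ s (R p.1)
    · simpa [F, h] using ((hfam _ (hR p.1)).1 _ h).1
    · simp [F, h]
  · rintro ⟨k, i⟩ ⟨l, j⟩ hne
    rcases lt_trichotomy k l with hkl | rfl | hlk
    · exact hFlt k i l j hkl
    · have hij : i ≠ j := fun h => hne (h ▸ rfl)
      by_cases hi : i ∈ s (R k)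
      · by_cases hj : j ∈ s (R k)
        · simpa [Function.onFun, F, hi, hj] using (hfam _ (hR k)).2 hi hj hij
        · simp [Function.onFun, F, hj]
      · simp [Function.onFun, F, hi]
    · exact (hFlt l j k i hlk).symm
  · exact (hsum _ (hR k)).trans_eq (Finset.sum_congr rfl fun i hi => by simp [F, hi])

end SLE.CapUnbounded

lemma H0.exists_sum_cap_le {𝔼 : SLE Ω} (hH0 : H0 𝔼) :
    ∃ K, ∀ s A, DisjointFamilyIn Set.univ s A → ∑ i ∈ s, 𝔼.cap (A i) ≤ K := by
  by_contra! h
  obtain ⟨F, hFm, hFd, hF1⟩ := SLE.CapUnbounded.exists_disjoint_family (𝔼 := 𝔼) fun t =>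
    let ⟨s, A, hA, ht⟩ := h t
    ⟨s, A, hA, ht.le⟩
  have hsum : Summable fun p => 𝔼.cap (F p) :=
    (Nat.pairEquiv.symm.summable_iff).1
      (hH0.summable_cap (fun n => hFm _) (hFd.comp_of_injective Nat.pairEquiv.symm.injective))
  obtain ⟨k, hk⟩ := (hsum.prod.tendsto_atTop_zero.eventually (gt_mem_nhds one_pos)).exists
  obtain ⟨s, hs⟩ := hF1 k
  linarith [(hsum.prod_factor k).sum_le_tsum s fun i _ => 𝔼.cap_nonneg _]

def partialSum (ξ : ℕ → BM Ω) (n : ℕ) (ω : Ω) : ℝ := ∑ i ∈ Finset.Icc 1 n, (ξ i : Ω → ℝ) ω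

def SLE.TendstoInCap (𝔼 : SLE Ω) (f : ℕ → Ω → ℝ) (η : Ω → ℝ) : Prop :=
  ∀ ε > 0, ∀ δ > 0, ∃ N₀ : ℕ, ∀ n ≥ N₀, 𝔼.cap {ω | ε < |f n ω - η ω|} < δ

section Capacity

variable {𝔼 : SLE Ω} {f : ℕ → Ω → ℝ}

lemma SLE.Regular.exists_tendstoInCap (hreg : 𝔼.Regular) (hf : ∀ n, Measurable (f n))
    {N : Set Ω} (hN : MeasurableSet N) (hN0 : 𝔼.cap N = 0)
    (hconv : ∀ ω ∉ N, ∃ l, Tendsto (f · ω) atTop (𝓝 l)) :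
    ∃ η, Measurable η ∧ 𝔼.TendstoInCap f η := by
  set η := fun ω => limUnder atTop (f · ω)
  have hη : Measurable η :=
    (StronglyMeasurable.limUnder fun n => (hf n).stronglyMeasurable).measurable
  refine ⟨η, hη, fun ε hε δ hδ => ?_⟩
  let D : ℕ → Set Ω := fun n => {ω | ε < |f n ω - η ω|}
  have hD : ∀ n, MeasurableSet (D n) := fun n =>
    measurableSet_lt measurable_const ((hf n).sub hη).abs
  let A : ℕ → Set Ω := fun n => (⋃ m ≥ n, D m) \ N
  have hA : ∀ n, MeasurableSet (A n) := fun n =>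
    (MeasurableSet.iUnion fun m => MeasurableSet.iUnion fun _ => hD m).diff hN
  have hAanti : Antitone A := fun m n hmn => Set.sdiff_subset_sdiff_left
    (Set.biUnion_mono (fun k hk => le_trans hmn hk) fun _ _ => subset_rfl)
  have hAempty : ⋂ n, A n = ∅ := by
    refine Set.eq_empty_of_forall_notMem fun ω hω => ?_
    have hω : ∀ n, ω ∈ A n := Set.mem_iInter.1 hω
    obtain ⟨l, hl⟩ := hconv ω (hω 0).2
    obtain ⟨n, hn⟩ := Metric.tendsto_atTop.1 (hl.limUnder_eq.symm ▸ hl) ε hε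
    obtain ⟨m, hm, hmD⟩ := Set.mem_iUnion₂.1 (hω n).1
    exact (hn m hm).not_ge (Real.dist_eq _ _ ▸ hmD.le)
  obtain ⟨N₀, hN₀⟩ :=
    ((hreg.tendsto_cap_zero hA hAanti hAempty).eventually (gt_mem_nhds hδ)).exists_forall_of_atTop
  refine ⟨N₀, fun n hn => ?_⟩
  calc 𝔼.cap (D n) ≤ 𝔼.cap (A N₀ ∪ N) := 𝔼.cap_mono ((hA N₀).union hN) fun ω hω =>
        (Classical.em (ω ∈ N)).elim Or.inr fun h => Or.inl ⟨Set.mem_iUnion₂.2 ⟨n, hn, hω⟩, h⟩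
    _ ≤ 𝔼.cap (A N₀) + 𝔼.cap N := 𝔼.cap_union_le (hA N₀) hN
    _ < δ := by rw [hN0, add_zero]; exact hN₀ N₀ le_rfl

lemma SLE.TendstoInCap.cap_sub_le {η : Ω → ℝ} (h : 𝔼.TendstoInCap f η)
    (hf : ∀ n, Measurable (f n)) (hη : Measurable η) {ε δ : ℝ} (hε : 0 < ε) (hδ : 0 < δ) :
    ∃ N, ∀ m ≥ N, ∀ n ≥ N, 𝔼.cap {ω | ε < |f n ω - f m ω|} ≤ δ := by
  obtain ⟨N, hN⟩ := h (ε / 2) (by positivity) (δ / 2) (by positivity)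
  have hD : ∀ k, MeasurableSet {ω | ε / 2 < |f k ω - η ω|} := fun k =>
    measurableSet_lt measurable_const ((hf k).sub hη).abs
  refine ⟨N, fun m hm n hn => ?_⟩
  calc 𝔼.cap {ω | ε < |f n ω - f m ω|}
      ≤ 𝔼.cap ({ω | ε / 2 < |f n ω - η ω|} ∪ {ω | ε / 2 < |f m ω - η ω|}) := by
        refine 𝔼.cap_mono ((hD n).union (hD m)) fun ω (hω : ε < _) => ?_
        by_contra! hle
        simp only [Set.mem_union, Set.mem_ofPred_eq, not_or, not_lt] at hle
        linarith [abs_sub_le (f n ω) (η ω) (f m ω), abs_sub_comm (η ω) (f m ω)]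
    _ ≤ _ := 𝔼.cap_union_le (hD n) (hD m)
    _ ≤ δ := by linarith [hN n hn, hN m hm]

end Capacity

section Exceedance

variable {α : Type*} {mα : MeasurableSpace α}

def exceedSet (f : ℕ → α → ℝ) (c : ℝ) (N m : ℕ) : Set α := {ω | N < m ∧ c < |f m ω - f N ω|}

def nonCauchySet (f : ℕ → α → ℝ) : Set α := ⋃ j : ℕ, ⋂ N, ⋃ m, exceedSet f (1 / (j + 1)) N m

lemma measurableSet_exceedSet {f : ℕ → α → ℝ} {c : ℝ} {N m : ℕ} (hm : Measurable (f m))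
    (hN : Measurable (f N)) : MeasurableSet (exceedSet f c N m) :=
  (MeasurableSet.const _).inter (measurableSet_lt measurable_const (hm.sub hN).abs)

lemma measurableSet_disjointed_exceedSet {f : ℕ → α → ℝ} {c : ℝ} {N m : ℕ}
    (hf : ∀ k ≤ m, Measurable (f k)) (hN : Measurable (f N)) :
    MeasurableSet (disjointed (exceedSet f c N) m) := by
  rw [disjointed_eq_inter_compl]
  exact (measurableSet_exceedSet (hf m le_rfl) hN).inter <| MeasurableSet.iInter fun k =>
    MeasurableSet.iInter fun hk => (measurableSet_exceedSet (hf k hk.le) hN).compl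

lemma measurableSet_nonCauchySet {f : ℕ → α → ℝ} (hf : ∀ n, Measurable (f n)) :
    MeasurableSet (nonCauchySet f) :=
  .iUnion fun _ => .iInter fun N => .iUnion fun m => measurableSet_exceedSet (hf m) (hf N)

lemma cauchySeq_of_notMem_nonCauchySet {f : ℕ → α → ℝ} {ω : α} (hω : ω ∉ nonCauchySet f) :
    CauchySeq (f · ω) := by
  rw [Metric.cauchySeq_iff']
  intro ε hε
  obtain ⟨j, hj⟩ := exists_nat_one_div_lt hε
  obtain ⟨N, hN⟩ : ∃ N, ∀ m, N < m → |f m ω - f N ω| ≤ 1 / (j + 1) := by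
    simp only [nonCauchySet, exceedSet, Set.mem_iUnion, Set.mem_iInter, not_exists, not_forall,
      Set.mem_ofPred_eq, not_and, not_lt] at hω
    exact hω j
  refine ⟨N, fun n hn => ?_⟩
  rcases hn.eq_or_lt with rfl | hlt
  · simpa using hε
  · exact Real.dist_eq _ _ ▸ (hN n hlt).trans_lt hj

end Exceedance

lemma sum_measureReal_le_of_cap_inter_le {𝔼 : SLE Ω} (μ : Measure Ω) [IsFiniteMeasure μ]
    (hμ : ∀ A, MeasurableSet A → μ.real A ≤ 𝔼.cap A) {s : Finset ℕ} {F B : ℕ → Set Ω}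
    {D : Set Ω} {δ K : ℝ} (hδ : 0 ≤ δ) (hF : ∀ m ∈ s, MeasurableSet (F m))
    (hB : ∀ m ∈ s, MeasurableSet (B m)) (hFd : (s : Set ℕ).PairwiseDisjoint F)
    (hK : ∑ m ∈ s, 𝔼.cap (F m) ≤ K) (hFB : ∀ m ∈ s, 𝔼.cap (F m ∩ B m) ≤ δ * 𝔼.cap (F m))
    (hD : ∀ m ∈ s, F m \ B m ⊆ D) :
    ∑ m ∈ s, μ.real (F m) ≤ δ * K + μ.real D := by
  have hsplit : ∀ m ∈ s, μ.real (F m) ≤ δ * 𝔼.cap (F m) + μ.real (F m \ B m) := fun m hm => by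
    rw [← measureReal_inter_add_sdiff (s := F m) (hB m hm)]
    linarith [hμ _ ((hF m hm).inter (hB m hm)), hFB m hm]
  have hrest : ∑ m ∈ s, μ.real (F m \ B m) ≤ μ.real D := by
    rw [← measureReal_biUnion_finset (hFd.mono fun m => Set.sdiff_subset)
      fun m hm => (hF m hm).diff (hB m hm)]
    exact measureReal_mono (Set.iUnion₂_subset hD)
  calc ∑ m ∈ s, μ.real (F m) ≤ ∑ m ∈ s, (δ * 𝔼.cap (F m) + μ.real (F m \ B m)) :=
        Finset.sum_le_sum hsplit
    _ = δ * ∑ m ∈ s, 𝔼.cap (F m) + ∑ m ∈ s, μ.real (F m \ B m) := by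
        rw [Finset.sum_add_distrib, Finset.mul_sum]
    _ ≤ δ * K + μ.real D := add_le_add (mul_le_mul_of_nonneg_left hK hδ) hrest

section PartialSum

variable (ξ : ℕ → BM Ω)

lemma measurable_partialSum (n : ℕ) : Measurable (partialSum ξ n) :=
  Finset.measurable_sum _ fun i _ => BM.measurable (ξ i)

lemma measurable_sigmaGen {a b i : ℕ} (hi : i ∈ Finset.Icc a b) :
    Measurable[sigmaGen ξ a b] (ξ i : Ω → ℝ) :=
  measurable_iff_comap_le.2 <| le_iSup₂ (f := fun i (_ : i ∈ Set.Icc a b) =>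
    MeasurableSpace.comap (fun ω => (ξ i : Ω → ℝ) ω) inferInstance) i (by simpa using hi)

lemma measurable_partialSum_sigmaGen {k m : ℕ} (hkm : k ≤ m) :
    Measurable[sigmaGen ξ 1 m] (partialSum ξ k) :=
  Finset.measurable_sum _ fun i hi => measurable_sigmaGen ξ (by simp at hi ⊢; omega)

lemma partialSum_sub {m n : ℕ} (h : m ≤ n) (ω : Ω) :
    partialSum ξ n ω - partialSum ξ m ω = ∑ i ∈ Finset.Ioc m n, (ξ i : Ω → ℝ) ω := by
  have hIcc : ∀ k, Finset.Icc 1 k = Finset.Ioc 0 k := Finset.Icc_add_one_left_eq_Ioc 0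
  rw [partialSum, partialSum, hIcc, hIcc, ← Finset.sum_Ioc_consecutive _ (Nat.zero_le m) h,
    add_sub_cancel_left]

lemma measurable_partialSum_sub_sigmaGen {m n : ℕ} (h : m ≤ n) :
    Measurable[sigmaGen ξ (m + 1) n] fun ω => partialSum ξ n ω - partialSum ξ m ω := by
  simp_rw [partialSum_sub ξ h]
  exact Finset.measurable_sum _ fun i hi => measurable_sigmaGen ξ (by simp at hi ⊢; omega)

variable {𝔼 : SLE Ω} {ξ}

lemma IndepSeq.cap_disjointed_inter_le (hind : IndepSeq 𝔼 ξ) {c ε δ : ℝ} {N m M : ℕ}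
    (hN : 1 ≤ N) (hmM : m < M)
    (hB : N < m → 𝔼.cap {ω | ε < |partialSum ξ M ω - partialSum ξ m ω|} ≤ δ) :
    𝔼.cap (disjointed (exceedSet (partialSum ξ) c N) m ∩
      {ω | ε < |partialSum ξ M ω - partialSum ξ m ω|}) ≤
      δ * 𝔼.cap (disjointed (exceedSet (partialSum ξ) c N) m) := by
  set F := disjointed (exceedSet (partialSum ξ) c N) m
  by_cases hNm : N < m
  · calc 𝔼.cap (F ∩ _) ≤ 𝔼.cap F * 𝔼.cap {ω | ε < |partialSum ξ M ω - partialSum ξ m ω|} :=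
          hind.2 m M (hN.trans hNm.le) hmM _ _
            (measurableSet_disjointed_exceedSet (fun k hk => measurable_partialSum_sigmaGen ξ hk)
              (measurable_partialSum_sigmaGen ξ hNm.le))
            (continuous_abs.measurable.comp (measurable_partialSum_sub_sigmaGen ξ hmM.le)
              measurableSet_Ioi)
      _ ≤ 𝔼.cap F * δ := mul_le_mul_of_nonneg_left (hB hNm) (𝔼.cap_nonneg F)
      _ = δ * 𝔼.cap F := mul_comm _ _
  · have hF : F = ∅ := Set.subset_empty_iff.1 fun ω hω => hNm (disjointed_subset _ m hω).1
    simp [hF, 𝔼.cap_empty]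

/-- Ottaviani's maximal inequality, for a measure dominated by the capacity. -/
lemma IndepSeq.measure_iUnion_exceedSet_le (hind : IndepSeq 𝔼 ξ) {K : ℝ}
    (hK : ∀ s A, DisjointFamilyIn Set.univ s A → ∑ i ∈ s, 𝔼.cap (A i) ≤ K)
    (μ : Measure Ω) [IsFiniteMeasure μ] (hμ : ∀ A, MeasurableSet A → μ.real A ≤ 𝔼.cap A)
    {ε δ : ℝ} (hδ : 0 ≤ δ) {N : ℕ} (hN : 1 ≤ N)
    (hcauchy : ∀ m ≥ N, ∀ n ≥ N, 𝔼.cap {ω | ε < |partialSum ξ n ω - partialSum ξ m ω|} ≤ δ) :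
    μ (⋃ m, exceedSet (partialSum ξ) (2 * ε) N m) ≤ ENNReal.ofReal (δ * K + δ) := by
  set S := partialSum ξ
  set E := exceedSet S (2 * ε) N
  have hS := measurable_partialSum ξ
  have hF : ∀ m, MeasurableSet (disjointed E m) := fun m =>
    measurableSet_disjointed_exceedSet (fun k _ => hS k) (hS N)
  have hsum : ∀ M ≥ N, ∑ m ∈ Finset.range M, μ.real (disjointed E m) ≤ δ * K + δ := by
    intro M hM
    have hFd := (disjoint_disjointed E).set_pairwise (Finset.range M : Set ℕ)
    refine (sum_measureReal_le_of_cap_inter_le μ hμ hδ (fun m _ => hF m)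
      (fun m _ => measurableSet_lt measurable_const ((hS M).sub (hS m)).abs) hFd
      (hK _ _ ⟨fun m _ => ⟨hF m, Set.subset_univ _⟩, hFd⟩)
      (fun m hm => hind.cap_disjointed_inter_le hN (Finset.mem_range.1 hm)
        fun hNm => hcauchy m hNm.le M hM)
      (D := {ω | ε < |S M ω - S N ω|}) fun m _ ω hω => ?_).trans ?_
    · obtain ⟨-, hexceed⟩ := disjointed_subset E m hω.1
      have hclose : |S M ω - S m ω| ≤ ε := not_lt.1 hω.2
      show ε < |S M ω - S N ω|
      linarith [abs_sub_le (S m ω) (S M ω) (S N ω), abs_sub_comm (S m ω) (S M ω)]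
    · linarith [hμ {ω | ε < |S M ω - S N ω|}
        (measurableSet_lt measurable_const ((hS M).sub (hS N)).abs), hcauchy N le_rfl M hM]
  rw [← iUnion_disjointed, measure_iUnion (disjoint_disjointed E) hF]
  refine ENNReal.tsum_le_of_sum_range_le fun n => ?_
  calc ∑ m ∈ Finset.range n, μ (disjointed E m)
      = ENNReal.ofReal (∑ m ∈ Finset.range n, μ.real (disjointed E m)) := by
        rw [ENNReal.ofReal_sum_of_nonneg fun _ _ => measureReal_nonneg]
        exact Finset.sum_congr rfl fun m _ => (ofReal_measureReal (measure_ne_top μ _)).symm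
    _ ≤ ENNReal.ofReal (δ * K + δ) := ENNReal.ofReal_le_ofReal <|
        (Finset.sum_le_sum_of_subset_of_nonneg (Finset.range_mono (Nat.le_add_right n N))
          fun _ _ _ => measureReal_nonneg).trans (hsum (n + N) (Nat.le_add_left N n))

lemma IndepSeq.measure_iInter_iUnion_exceedSet_eq_zero (hind : IndepSeq 𝔼 ξ) {K : ℝ}
    (hK : ∀ s A, DisjointFamilyIn Set.univ s A → ∑ i ∈ s, 𝔼.cap (A i) ≤ K)
    (μ : Measure Ω) [IsFiniteMeasure μ] (hμ : ∀ A, MeasurableSet A → μ.real A ≤ 𝔼.cap A)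
    {η : Ω → ℝ} (hη : Measurable η) (hconv : 𝔼.TendstoInCap (partialSum ξ) η) {c : ℝ}
    (hc : 0 < c) : μ (⋂ N, ⋃ m, exceedSet (partialSum ξ) c N m) = 0 := by
  have hK0 : 0 ≤ K := by simpa using hK ∅ (fun _ => ∅) ⟨by simp, by simp⟩
  refine le_antisymm (ENNReal.le_of_forall_pos_le_add fun γ hγ _ => ?_) zero_le
  obtain ⟨N, hN⟩ := hconv.cap_sub_le (measurable_partialSum ξ) hη (half_pos hc)
    (show (0 : ℝ) < γ / (K + 1) by positivity)
  have hmax := hind.measure_iUnion_exceedSet_le hK μ hμ (by positivity) (le_max_left 1 N)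
    fun m hm n hn => hN m (le_of_max_le_right hm) n (le_of_max_le_right hn)
  rw [mul_div_cancel₀ c two_ne_zero,
    ← mul_add_one, div_mul_cancel₀ _ (by positivity : K + 1 ≠ 0), ENNReal.ofReal_coe_nnreal] at hmax
  exact (measure_mono (Set.iInter_subset _ (max 1 N))).trans (by rwa [zero_add])

end PartialSum

/-- Under regularity and (H₀), for an independent sequence the partial sums
converge C-quasi-surely to a finite-valued random variable iff they converge in capacity. -/
theorem qs_convergence_iff_capacity_convergence (𝔼 : SLE Ω) (hreg : 𝔼.Regular) (hH0 : H0 𝔼)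
    (ξ : ℕ → BM Ω) (hind : IndepSeq 𝔼 ξ) :
    (∃ N : Set Ω, MeasurableSet N ∧ 𝔼.cap N = 0 ∧ ∀ ω ∉ N,
        ∃ l : ℝ, Tendsto (fun n => ∑ i ∈ Finset.Icc 1 n, (ξ i : Ω → ℝ) ω) atTop (𝓝 l)) ↔
    (∃ η : Ω → ℝ, Measurable η ∧ ∀ ε > 0, ∀ δ > 0, ∃ N₀ : ℕ, ∀ n ≥ N₀,
        𝔼.cap {ω | ε < |(∑ i ∈ Finset.Icc 1 n, (ξ i : Ω → ℝ) ω) - η ω|} < δ) := by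
  constructor
  · rintro ⟨N, hN, hN0, hconv⟩
    exact hreg.exists_tendstoInCap (measurable_partialSum ξ) hN hN0 hconv
  · rintro ⟨η, hη, hconv⟩
    obtain ⟨K, hK⟩ := hH0.exists_sum_cap_le
    have hbad := measurableSet_nonCauchySet (measurable_partialSum ξ)
    refine ⟨nonCauchySet (partialSum ξ), hbad, 𝔼.cap_eq_zero_of_forall_toMeasure hreg hbad
      fun L hL => ?_, fun ω hω => ⟨_, (cauchySeq_of_notMem_nonCauchySet hω).tendsto_limUnder⟩⟩
    have := hL.isProbabilityMeasure_toMeasure hreg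
    exact measure_iUnion_null fun j => hind.measure_iInter_iUnion_exceedSet_eq_zero hK _
      (fun A hA => hL.measureReal_toMeasure_le_cap hreg hA) hη hconv (by positivity)
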